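/- Let F be a finite measure on [0,∞) and z : [0,∞) → [0,∞) measurable and bounded on finite intervals (i.e., sup_{0≤t≤T} |z(t)| < ∞ for every T < ∞). Then the renewal equation Z(t) = z(t) + ∫₀^t Z(t-u) F(du) has a unique measurable solution bounded on finite intervals, given by Z(t) = ∫₀^t z(t-u) Φ(du) where Φ(t) = Σ_{n≥0} F^{*n}(t). -/

import Mathlib

open MeasureTheory

/-- Convolution of two measures on `ℝ`. -/
noncomputable def mconv (μ ν : Measure ℝ) : Measure ℝ :=
  (μ.prod ν).map (fun p => p.1 + p.2)

/-- `mpow F n = F^{*n}`, with `F^{*0} = δ₀`. -/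
noncomputable def mpow (F : Measure ℝ) : ℕ → Measure ℝ
  | 0 => Measure.dirac 0
  | n + 1 => mconv (mpow F n) F

/-- The renewal measure `Φ = Σ_{n≥0} F^{*n}`. -/
noncomputable def renewalMeasure (F : Measure ℝ) : Measure ℝ :=
  Measure.sum (fun n => mpow F n)

/-- A function is bounded on finite intervals. -/
def BddOnFinite (Z : ℝ → ℝ) : Prop := ∀ T : ℝ, ∃ C : ℝ, ∀ t ∈ Set.Icc 0 T, |Z t| ≤ C

/-!
Write `(μ ⋆ g)(t) = ∫₀ᵗ g(t - u) μ(du)`. For measures living on `[0, ∞)` only the finite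
restrictions to `[0, t]` matter, and Fubini gives `(μ ∗ ν) ⋆ g = ν ⋆ (μ ⋆ g)`. Applied to
`Φ = δ₀ + Φ ∗ F` this is the renewal equation for `Φ ⋆ z`. If `D` is the difference of two
solutions, then `D = F ⋆ D`, hence `D = F^{*n} ⋆ D` for all `n` and `|D t| ≤ C F^{*n}[0, t]`,
which tends to `0` because `∑ₙ F^{*n}[0, t] = Φ[0, t] < ∞`.
-/

open Set Filter Topology
open scoped ENNReal

section MeasureConvolution

instance isFiniteMeasure_mconv (μ ν : Measure ℝ) [IsFiniteMeasure μ] [IsFiniteMeasure ν] :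
    IsFiniteMeasure (mconv μ ν) := by
  unfold mconv; infer_instance

instance isFiniteMeasure_mpow (F : Measure ℝ) [IsFiniteMeasure F] (n : ℕ) :
    IsFiniteMeasure (mpow F n) := by
  induction n with
  | zero => unfold mpow; infer_instance
  | succ n ih => unfold mpow; infer_instance

instance sFinite_renewalMeasure (F : Measure ℝ) [IsFiniteMeasure F] :
    SFinite (renewalMeasure F) := by
  unfold renewalMeasure; infer_instance

lemma ae_nonneg_of_Iio_null {μ : Measure ℝ} (h : μ (Iio 0) = 0) : ∀ᵐ x ∂μ, 0 ≤ x :=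
  ae_iff.2 <| by simp only [not_le]; exact h

lemma ae_nonneg_prod {μ ν : Measure ℝ} (hμ : ∀ᵐ a ∂μ, 0 ≤ a) (hν : ∀ᵐ b ∂ν, 0 ≤ b) :
    ∀ᵐ p ∂μ.prod ν, 0 ≤ p.1 ∧ 0 ≤ p.2 :=
  (Measure.quasiMeasurePreserving_fst.ae hμ).and (Measure.quasiMeasurePreserving_snd.ae hν)

lemma ae_nonneg_mconv {μ ν : Measure ℝ} (hμ : ∀ᵐ a ∂μ, 0 ≤ a) (hν : ∀ᵐ b ∂ν, 0 ≤ b) :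
    ∀ᵐ w ∂mconv μ ν, 0 ≤ w := by
  rw [mconv, ae_map_iff measurable_add.aemeasurable measurableSet_Ici]
  filter_upwards [ae_nonneg_prod hμ hν] with p hp
  exact add_nonneg hp.1 hp.2

lemma ae_nonneg_mpow {F : Measure ℝ} (hF : ∀ᵐ x ∂F, 0 ≤ x) (n : ℕ) :
    ∀ᵐ x ∂mpow F n, 0 ≤ x := by
  induction n with
  | zero => simp [mpow]
  | succ n ih => exact ae_nonneg_mconv ih hF

lemma ae_nonneg_renewalMeasure {F : Measure ℝ} (hF : ∀ᵐ x ∂F, 0 ≤ x) :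
    ∀ᵐ x ∂renewalMeasure F, 0 ≤ x :=
  Measure.ae_sum_iff.2 (ae_nonneg_mpow hF)

lemma renewalMeasure_eq_dirac_add_mconv (F : Measure ℝ) [SFinite F] :
    renewalMeasure F = Measure.dirac 0 + mconv (renewalMeasure F) F := by
  have h1 : mconv (renewalMeasure F) F = Measure.sum (fun n => mpow F (n + 1)) := by
    rw [renewalMeasure, mconv, Measure.prod_sum_left,
      Measure.map_sum measurable_add.aemeasurable]
    rfl
  ext s hs
  rw [h1, renewalMeasure, Measure.sum_apply _ hs, Measure.add_apply, Measure.sum_apply _ hs,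
    tsum_eq_zero_add' ENNReal.summable]
  rfl

end MeasureConvolution

noncomputable def causalConv (μ : Measure ℝ) (g : ℝ → ℝ) (t : ℝ) : ℝ :=
  ∫ u in Icc 0 t, g (t - u) ∂μ

lemma sub_mem_Icc_zero {t u : ℝ} (hu : u ∈ Icc 0 t) : t - u ∈ Icc 0 t :=
  ⟨sub_nonneg.2 hu.2, sub_le_self t hu.1⟩

lemma BddOnFinite.sub {f g : ℝ → ℝ} (hf : BddOnFinite f) (hg : BddOnFinite g) :
    BddOnFinite (f - g) := by
  intro T
  obtain ⟨C, hC⟩ := hf T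
  obtain ⟨C', hC'⟩ := hg T
  exact ⟨C + C', fun t ht => (abs_sub _ _).trans (add_le_add (hC t ht) (hC' t ht))⟩

section CausalConv

variable {μ ν : Measure ℝ} {f g : ℝ → ℝ} {t : ℝ}

lemma measurable_causalConv [SFinite μ] (hg : Measurable g) : Measurable (causalConv μ g) := by
  have hE : MeasurableSet {q : ℝ × ℝ | q.2 ∈ Icc 0 q.1} :=
    (measurableSet_le measurable_const measurable_snd).inter
      (measurableSet_le measurable_snd measurable_fst)
  have hf : Measurable fun q : ℝ × ℝ =>
      {q : ℝ × ℝ | q.2 ∈ Icc 0 q.1}.indicator (fun q => g (q.1 - q.2)) q :=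
    (hg.comp (measurable_fst.sub measurable_snd)).indicator hE
  convert (hf.stronglyMeasurable.integral_prod_right' (ν := μ)).measurable using 2 with t
  exact (integral_indicator measurableSet_Icc).symm

lemma integrableOn_causalConv_integrand (hg : Measurable g) (hgb : BddOnFinite g)
    (hμt : μ (Icc 0 t) < ∞) : IntegrableOn (fun u => g (t - u)) (Icc 0 t) μ := by
  obtain ⟨C, hC⟩ := hgb t
  refine Measure.integrableOn_of_bounded (M := C) hμt.ne
    (hg.comp (measurable_const.sub measurable_id)).aestronglyMeasurable ?_
  filter_upwards [ae_restrict_mem measurableSet_Icc] with u hu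
  exact hC _ (sub_mem_Icc_zero hu)

lemma abs_causalConv_le {C : ℝ} (hC : ∀ s ∈ Icc 0 t, |g s| ≤ C) (hμt : μ (Icc 0 t) < ∞) :
    |causalConv μ g t| ≤ C * μ.real (Icc 0 t) :=
  (Real.norm_eq_abs _).symm.trans_le <| norm_setIntegral_le_of_norm_le_const
    (f := fun u => g (t - u)) hμt fun _ hu => hC _ (sub_mem_Icc_zero hu)

lemma bddOnFinite_causalConv (hgb : BddOnFinite g) (hμ : ∀ t, μ (Icc 0 t) < ∞) :
    BddOnFinite (causalConv μ g) := by
  intro T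
  obtain ⟨C, hC⟩ := hgb T
  refine ⟨max C 0 * μ.real (Icc 0 T), fun t ht => ?_⟩
  calc |causalConv μ g t|
      ≤ max C 0 * μ.real (Icc 0 t) :=
        abs_causalConv_le (fun s hs => (hC s ⟨hs.1, hs.2.trans ht.2⟩).trans (le_max_left _ _))
          (hμ t)
    _ ≤ max C 0 * μ.real (Icc 0 T) :=
        mul_le_mul_of_nonneg_left (measureReal_mono (Icc_subset_Icc_right ht.2) (hμ T).ne)
          (le_max_right _ _)

lemma causalConv_dirac_zero (hg : Measurable g) (ht : 0 ≤ t) :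
    causalConv (Measure.dirac 0) g t = g t := by
  have hgt : Measurable fun u => g (t - u) := by fun_prop
  rw [causalConv, setIntegral_dirac' hgt.stronglyMeasurable 0 measurableSet_Icc,
    if_pos ⟨le_rfl, ht⟩, sub_zero]

lemma causalConv_add_measure (hμ : IntegrableOn (fun u => g (t - u)) (Icc 0 t) μ)
    (hν : IntegrableOn (fun u => g (t - u)) (Icc 0 t) ν) :
    causalConv (μ + ν) g t = causalConv μ g t + causalConv ν g t := by
  rw [causalConv, Measure.restrict_add, integral_add_measure hμ hν]
  rfl

lemma causalConv_sub (hf : Measurable f) (hfb : BddOnFinite f) (hg : Measurable g)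
    (hgb : BddOnFinite g) (hμt : μ (Icc 0 t) < ∞) :
    causalConv μ f t - causalConv μ g t = causalConv μ (f - g) t :=
  (integral_sub (integrableOn_causalConv_integrand hf hfb hμt)
    (integrableOn_causalConv_integrand hg hgb hμt)).symm

theorem causalConv_mconv [SFinite μ] [SFinite ν] (hμ : ∀ᵐ a ∂μ, 0 ≤ a)
    (hν : ∀ᵐ b ∂ν, 0 ≤ b) (hg : Measurable g) (hgb : BddOnFinite g)
    (hμt : μ (Icc 0 t) < ∞) (hνt : ν (Icc 0 t) < ∞) :
    causalConv (mconv μ ν) g t = causalConv ν (causalConv μ g) t := by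
  set S : Set ℝ := Icc 0 t
  set T : Set (ℝ × ℝ) := {p | p.1 ≤ t - p.2}
  set h : ℝ × ℝ → ℝ := fun p => g (t - p.2 - p.1)
  have hT : MeasurableSet T := measurableSet_le measurable_fst (measurable_const.sub measurable_snd)
  have hgt : Measurable fun u => g (t - u) := hg.comp (measurable_const.sub measurable_id)
  have hh : Measurable h := hg.comp ((measurable_const.sub measurable_snd).sub measurable_fst)
  -- both supports lie in `[0, ∞)`, so `a + b ∈ [0, t]` forces `a, b ∈ [0, t]`
  have hsets :
      (fun p : ℝ × ℝ => p.1 + p.2) ⁻¹' S =ᵐ[μ.prod ν] ((S ×ˢ S) ∩ T : Set (ℝ × ℝ)) := by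
    refine eventuallyEq_set.2 ?_
    filter_upwards [ae_nonneg_prod hμ hν] with p ⟨ha, hb⟩
    simp only [S, T, mem_preimage, mem_inter_iff, mem_prod, mem_Icc, mem_ofPred_eq]
    constructor
    · rintro ⟨-, hle⟩
      exact ⟨⟨⟨ha, by linarith⟩, hb, by linarith⟩, by linarith⟩
    · rintro ⟨-, hle⟩
      exact ⟨by linarith, by linarith⟩
  have hint : Integrable (T.indicator h) ((μ.restrict S).prod (ν.restrict S)) := by
    have : IsFiniteMeasure (μ.restrict S) := isFiniteMeasure_restrict.2 hμt.ne
    have : IsFiniteMeasure (ν.restrict S) := isFiniteMeasure_restrict.2 hνt.ne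
    obtain ⟨C, hC⟩ := hgb t
    refine Integrable.of_bound (hh.indicator hT).aestronglyMeasurable (max C 0) ?_
    rw [Measure.prod_restrict]
    filter_upwards [ae_restrict_mem (measurableSet_Icc.prod measurableSet_Icc)] with p hp
    obtain ⟨⟨ha, -⟩, ⟨hb, -⟩⟩ := hp
    by_cases hpT : p.1 ≤ t - p.2
    · rw [indicator_of_mem (show p ∈ T from hpT)]
      exact (hC _ ⟨by linarith, by linarith⟩).trans (le_max_left _ _)
    · rw [indicator_of_notMem (show p ∉ T from hpT), norm_zero]
      exact le_max_right _ _
  calc causalConv (mconv μ ν) g t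
      = ∫ p in (fun p : ℝ × ℝ => p.1 + p.2) ⁻¹' S, h p ∂μ.prod ν := by
        rw [causalConv, mconv, Measure.restrict_map measurable_add measurableSet_Icc,
          integral_map measurable_add.aemeasurable hgt.aestronglyMeasurable]
        simp only [h, S, sub_add_eq_sub_sub_swap]
    _ = ∫ p in S ×ˢ S, T.indicator h p ∂μ.prod ν := by
        rw [setIntegral_congr_set hsets, setIntegral_indicator hT]
    _ = ∫ b in S, ∫ a in S, T.indicator h (a, b) ∂μ ∂ν := by
        rw [← Measure.prod_restrict, integral_prod_symm _ hint]
    _ = causalConv ν (causalConv μ g) t := by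
        refine setIntegral_congr_fun measurableSet_Icc fun b hb => ?_
        have hSb : S ∩ Iic (t - b) = Icc 0 (t - b) := by
          ext a
          simp only [S, mem_inter_iff, mem_Icc, mem_Iic]
          constructor
          · rintro ⟨⟨ha, -⟩, hab⟩
            exact ⟨ha, hab⟩
          · rintro ⟨ha, hab⟩
            exact ⟨⟨ha, by linarith [hb.1]⟩, hab⟩
        exact (setIntegral_indicator (f := fun a => h (a, b)) measurableSet_Iic).trans
          (by rw [hSb])

theorem causalConv_renewalMeasure {F : Measure ℝ} [IsFiniteMeasure F] (hF : ∀ᵐ x ∂F, 0 ≤ x)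
    (hg : Measurable g) (hgb : BddOnFinite g) (ht : 0 ≤ t)
    (hΦt : renewalMeasure F (Icc 0 t) < ∞) :
    causalConv (renewalMeasure F) g t = g t + causalConv F (causalConv (renewalMeasure F) g) t := by
  have hΦ := renewalMeasure_eq_dirac_add_mconv F
  have hconv : mconv (renewalMeasure F) F (Icc 0 t) < ∞ :=
    (Measure.le_iff'.1 (Measure.le_add_left le_rfl) _).trans_lt (hΦ ▸ hΦt)
  conv_lhs => rw [hΦ]
  rw [causalConv_add_measure (integrableOn_causalConv_integrand hg hgb (measure_lt_top _ _))
      (integrableOn_causalConv_integrand hg hgb hconv),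
    causalConv_dirac_zero hg ht,
    causalConv_mconv (ae_nonneg_renewalMeasure hF) hF hg hgb hΦt (measure_lt_top _ _)]

end CausalConv

section Uniqueness

variable {F : Measure ℝ} [IsFiniteMeasure F] {D : ℝ → ℝ}

lemma eq_causalConv_mpow_of_eq_causalConv (hF : ∀ᵐ x ∂F, 0 ≤ x) (hD : Measurable D)
    (hDb : BddOnFinite D) (hDF : ∀ t, 0 ≤ t → D t = causalConv F D t) (n : ℕ) :
    ∀ t, 0 ≤ t → D t = causalConv (mpow F n) D t := by
  induction n with
  | zero => exact fun t ht => (causalConv_dirac_zero hD ht).symm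
  | succ n ih =>
    intro t ht
    rw [mpow, causalConv_mconv (ae_nonneg_mpow hF n) hF hD hDb (measure_lt_top _ _)
      (measure_lt_top _ _), hDF t ht]
    exact setIntegral_congr_fun measurableSet_Icc fun u hu => ih _ (sub_mem_Icc_zero hu).1

theorem eq_zero_of_eq_causalConv (hF : ∀ᵐ x ∂F, 0 ≤ x)
    (hΦ : ∀ t, renewalMeasure F (Icc 0 t) < ∞) (hD : Measurable D) (hDb : BddOnFinite D)
    (hDF : ∀ t, 0 ≤ t → D t = causalConv F D t) {t : ℝ} (ht : 0 ≤ t) : D t = 0 := by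
  obtain ⟨C, hC⟩ := hDb t
  have hbound : ∀ n, |D t| ≤ C * (mpow F n).real (Icc 0 t) := fun n => by
    rw [eq_causalConv_mpow_of_eq_causalConv hF hD hDb hDF n t ht]
    exact abs_causalConv_le hC (measure_lt_top _ _)
  have hmpow : Tendsto (fun n => mpow F n (Icc 0 t)) atTop (𝓝 0) :=
    ENNReal.tendsto_atTop_zero_of_tsum_ne_top <| by
      rw [← Measure.sum_apply _ measurableSet_Icc]
      exact (hΦ t).ne
  have hlim : Tendsto (fun n => C * (mpow F n).real (Icc 0 t)) atTop (𝓝 0) := by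
    simpa [Measure.real] using
      ((ENNReal.tendsto_toReal ENNReal.zero_ne_top).comp hmpow).const_mul C
  exact abs_nonpos_iff.1 (ge_of_tendsto' hlim hbound)

end Uniqueness

theorem renewal_equation_solution_general
    (F : Measure ℝ) [IsFiniteMeasure F] (hFsupp : F (Set.Iio 0) = 0)
    (z : ℝ → ℝ) (hz : Measurable z) (hzb : BddOnFinite z)
    (hΦfin : ∀ t : ℝ, renewalMeasure F (Set.Icc 0 t) < ⊤) :
    (Measurable (fun t => ∫ u in Set.Icc 0 t, z (t - u) ∂(renewalMeasure F)) ∧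
      BddOnFinite (fun t => ∫ u in Set.Icc 0 t, z (t - u) ∂(renewalMeasure F)) ∧
      ∀ t, 0 ≤ t →
        (∫ u in Set.Icc 0 t, z (t - u) ∂(renewalMeasure F))
          = z t + ∫ u in Set.Icc 0 t,
              (∫ v in Set.Icc 0 (t - u), z (t - u - v) ∂(renewalMeasure F)) ∂F) ∧
    ∀ Z : ℝ → ℝ, Measurable Z → BddOnFinite Z →
      (∀ t, 0 ≤ t → Z t = z t + ∫ u in Set.Icc 0 t, Z (t - u) ∂F) →
      ∀ t, 0 ≤ t → Z t = ∫ u in Set.Icc 0 t, z (t - u) ∂(renewalMeasure F) := by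
  set Φ := renewalMeasure F
  have hF : ∀ᵐ x ∂F, 0 ≤ x := ae_nonneg_of_Iio_null hFsupp
  have hZ₀ : Measurable (causalConv Φ z) := measurable_causalConv hz
  have hZ₀b : BddOnFinite (causalConv Φ z) := bddOnFinite_causalConv hzb hΦfin
  have hZ₀eq : ∀ t, 0 ≤ t → causalConv Φ z t = z t + causalConv F (causalConv Φ z) t :=
    fun t ht => causalConv_renewalMeasure hF hz hzb ht (hΦfin t)
  refine ⟨⟨hZ₀, hZ₀b, hZ₀eq⟩, fun Z hZ hZb hZeq t ht => ?_⟩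
  have hdiff : ∀ s, 0 ≤ s → (Z - causalConv Φ z) s = causalConv F (Z - causalConv Φ z) s := by
    intro s hs
    rw [Pi.sub_apply, hZeq s hs, hZ₀eq s hs,
      ← causalConv_sub hZ hZb hZ₀ hZ₀b (measure_lt_top _ _)]
    exact add_sub_add_left_eq_sub _ _ _
  exact sub_eq_zero.1 (eq_zero_of_eq_causalConv hF hΦfin (hZ.sub hZ₀) (hZb.sub hZ₀b) hdiff ht)

/-- Existence and uniqueness of the solution of the renewal equation
`Z(t) = z(t) + ∫₀ᵗ Z(t-u) F(du)`: the unique measurable solution bounded on finite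
intervals is `Z(t) = ∫₀ᵗ z(t-u) Φ(du)` where `Φ = Σ_{n≥0} F^{*n}`. -/
theorem renewal_equation_solution
    (F : Measure ℝ) [IsFiniteMeasure F] (hFsupp : F (Set.Iio 0) = 0)
    (z : ℝ → ℝ) (hz : Measurable z) (hznn : ∀ t, 0 ≤ z t) (hzb : BddOnFinite z)
    (hΦfin : ∀ t : ℝ, renewalMeasure F (Set.Icc 0 t) < ⊤) :
    (Measurable (fun t => ∫ u in Set.Icc 0 t, z (t - u) ∂(renewalMeasure F)) ∧
      BddOnFinite (fun t => ∫ u in Set.Icc 0 t, z (t - u) ∂(renewalMeasure F)) ∧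
      ∀ t, 0 ≤ t →
        (∫ u in Set.Icc 0 t, z (t - u) ∂(renewalMeasure F))
          = z t + ∫ u in Set.Icc 0 t,
              (∫ v in Set.Icc 0 (t - u), z (t - u - v) ∂(renewalMeasure F)) ∂F) ∧
    ∀ Z : ℝ → ℝ, Measurable Z → BddOnFinite Z →
      (∀ t, 0 ≤ t → Z t = z t + ∫ u in Set.Icc 0 t, Z (t - u) ∂F) →
      ∀ t, 0 ≤ t → Z t = ∫ u in Set.Icc 0 t, z (t - u) ∂(renewalMeasure F) :=
  renewal_equation_solution_general F hFsupp z hz hzb hΦfin
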